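/- arXiv:2408.06512 — 3 statements merged into one kernel-verified Lean document; each statement's English description precedes it below -/
import Mathlib

section
/- Let n be a natural number and let p, q, r : Fin n → ℝ satisfy 0 ≤ p(v), 0 ≤ q(v), p(v) + q(v) ≤ 1 and p(v) + q(v) > 0 for every item v. Define the score s(v) = p(v)·r(v)/(p(v)+q(v)). If σ is a permutation of Fin n that orders the items by non-increasing score, i.e. for all positions i ≤ i' one has s(σ(i)) ≥ s(σ(i')), then σ maximizes the cascade objective: for every permutation τ of Fin n, F(σ) ≥ F(τ). -/
open Finset

/-- Cascade click probability of the item at position `i` under ranking `σ`: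
`P^i(σ) = (∏_{j<i} (1 − p(σ j) − q(σ j))) · p(σ i)`. -/
noncomputable def cascadeProb {n : ℕ} (p q : Fin n → ℝ) (σ : Equiv.Perm (Fin n))
    (i : Fin n) : ℝ :=
  (∏ j ∈ Finset.Iio i, (1 - p (σ j) - q (σ j))) * p (σ i)

/-- Cascade objective: `F(σ) = Σ_i P^i(σ) · r(σ i)`. -/
noncomputable def cascadeF {n : ℕ} (p q r : Fin n → ℝ) (σ : Equiv.Perm (Fin n)) : ℝ :=
  ∑ i : Fin n, cascadeProb p q σ i * r (σ i)

/-!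
Read the objective recursively over the ranked list: `F(v :: l) = p v r v + (1 - p v - q v) F(l)`.
Exchanging the first two items, `v w ↦ w v`, changes `F` by
`p w r w (p v + q v) - p v r v (p w + q w)`, which is nonnegative exactly when `s v ≤ s w`.
Hence an item of maximal score can be bubbled to the front of any ranking without decreasing `F`,
and since the continuation probabilities `1 - p - q` are nonnegative, the remaining items can then
be sorted by induction.
-/

lemma Fin.prod_Iio_succ {M : Type*} [CommMonoid M] {n : ℕ} (f : Fin (n + 1) → M) (i : Fin n) :
    ∏ j ∈ Iio i.succ, f j = f 0 * ∏ j ∈ Iio i, f j.succ := by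
  have h : Iio i.succ = insert 0 (Ioo 0 i.succ) := by
    ext j
    simp [Fin.pos_iff_ne_zero]
  rw [h, prod_insert (by simp), ← Fin.map_succEmb_Iio, prod_map]
  rfl

namespace Cascade

variable {α : Type*} (p q r : α → ℝ)

noncomputable def value : List α → ℝ
  | [] => 0
  | v :: l => p v * r v + (1 - p v - q v) * value l

noncomputable def score (v : α) : ℝ :=
  p v * r v / (p v + q v)

variable {p q r}

lemma value_swap_le {v w : α} (l : List α) (hv : 0 < p v + q v) (hw : 0 < p w + q w)
    (hvw : score p q r v ≤ score p q r w) :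
    value p q r (v :: w :: l) ≤ value p q r (w :: v :: l) := by
  have hcross : p v * r v * (p w + q w) ≤ p w * r w * (p v + q v) :=
    (div_le_div_iff₀ hv hw).mp hvw
  have hgain : value p q r (w :: v :: l) - value p q r (v :: w :: l) =
      p w * r w * (p v + q v) - p v * r v * (p w + q w) := by
    simp only [value]
    ring
  linarith

lemma value_append_cons_le_cons_append (hle : ∀ v, p v + q v ≤ 1) (hpos : ∀ v, 0 < p v + q v)
    {v : α} (l₂ : List α) :
    ∀ l₁ : List α, (∀ u ∈ l₁, score p q r u ≤ score p q r v) →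
      value p q r (l₁ ++ v :: l₂) ≤ value p q r (v :: (l₁ ++ l₂))
  | [], _ => le_rfl
  | u :: l₁, hl₁ => by
    have ih := value_append_cons_le_cons_append hle hpos l₂ l₁ fun x hx => hl₁ x (.tail u hx)
    calc value p q r (u :: (l₁ ++ v :: l₂))
        = p u * r u + (1 - p u - q u) * value p q r (l₁ ++ v :: l₂) := rfl
      _ ≤ p u * r u + (1 - p u - q u) * value p q r (v :: (l₁ ++ l₂)) := by
        gcongr; linarith [hle u]
      _ = value p q r (u :: v :: (l₁ ++ l₂)) := rfl
      _ ≤ value p q r (v :: u :: (l₁ ++ l₂)) :=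
        value_swap_le _ (hpos u) (hpos v) (hl₁ u (.head l₁))

theorem value_le_of_perm_of_pairwise (hle : ∀ v, p v + q v ≤ 1) (hpos : ∀ v, 0 < p v + q v) :
    ∀ {l l' : List α}, l.Pairwise (fun v w => score p q r w ≤ score p q r v) → l'.Perm l →
      value p q r l' ≤ value p q r l
  | [], _, _, hperm => by rw [hperm.eq_nil]
  | v :: l, l', hsorted, hperm => by
    rw [List.pairwise_cons] at hsorted
    obtain ⟨l₁, l₂, rfl⟩ := List.append_of_mem (hperm.symm.subset (List.mem_cons_self ..))
    have hrest : (l₁ ++ l₂).Perm l := (List.perm_middle.symm.trans hperm).cons_inv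
    have hfront : ∀ u ∈ l₁, score p q r u ≤ score p q r v := by
      intro u hu
      rcases List.mem_cons.mp (hperm.subset (List.mem_append_left _ hu)) with rfl | hu
      · exact le_rfl
      · exact hsorted.1 u hu
    calc value p q r (l₁ ++ v :: l₂)
        ≤ value p q r (v :: (l₁ ++ l₂)) :=
          value_append_cons_le_cons_append hle hpos l₂ l₁ hfront
      _ ≤ value p q r (v :: l) := by
        simp only [value]
        gcongr
        · linarith [hle v]
        · exact value_le_of_perm_of_pairwise hle hpos hsorted.2 hrest

lemma value_ofFn :
    ∀ {n : ℕ} (f : Fin n → α),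
      ∑ i : Fin n, (∏ j ∈ Iio i, (1 - p (f j) - q (f j))) * p (f i) * r (f i) =
        value p q r (List.ofFn f)
  | 0, _ => rfl
  | n + 1, f => by
    rw [Fin.sum_univ_succ, List.ofFn_succ, value, ← value_ofFn (fun i => f i.succ),
      Finset.mul_sum]
    simp [Fin.prod_Iio_succ, mul_assoc, ← bot_eq_zero]

end Cascade

open Cascade

lemma cascadeF_eq_value {n : ℕ} (p q r : Fin n → ℝ) (σ : Equiv.Perm (Fin n)) :
    cascadeF p q r σ = value p q r (List.ofFn σ) :=
  value_ofFn σ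

theorem sorted_by_score_maximizes_cascade_general (n : ℕ) (p q r : Fin n → ℝ)
    (hpq_le : ∀ v, p v + q v ≤ 1) (hpq_pos : ∀ v, 0 < p v + q v)
    (σ : Equiv.Perm (Fin n))
    (hsorted : ∀ i i' : Fin n, i ≤ i' →
      p (σ i) * r (σ i) / (p (σ i) + q (σ i)) ≥
        p (σ i') * r (σ i') / (p (σ i') + q (σ i'))) :
    ∀ τ : Equiv.Perm (Fin n), cascadeF p q r σ ≥ cascadeF p q r τ := by
  intro τ
  have hperm : (List.ofFn τ).Perm (List.ofFn σ) :=
    (τ.ofFn_comp_perm id).trans (σ.ofFn_comp_perm id).symm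
  rw [ge_iff_le, cascadeF_eq_value, cascadeF_eq_value]
  exact value_le_of_perm_of_pairwise hpq_le hpq_pos
    (List.pairwise_ofFn.2 fun i i' h => hsorted i i' h.le) hperm

/-- If `σ` orders the items by non-increasing score
`s(v) = p(v)·r(v)/(p(v)+q(v))`, then `σ` maximizes the cascade objective. -/
theorem sorted_by_score_maximizes_cascade (n : ℕ) (p q r : Fin n → ℝ)
    (hp : ∀ v, 0 ≤ p v) (hq : ∀ v, 0 ≤ q v)
    (hpq_le : ∀ v, p v + q v ≤ 1) (hpq_pos : ∀ v, 0 < p v + q v)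
    (σ : Equiv.Perm (Fin n))
    (hsorted : ∀ i i' : Fin n, i ≤ i' →
      p (σ i) * r (σ i) / (p (σ i) + q (σ i)) ≥
        p (σ i') * r (σ i') / (p (σ i') + q (σ i'))) :
    ∀ τ : Equiv.Perm (Fin n), cascadeF p q r σ ≥ cascadeF p q r τ :=
  sorted_by_score_maximizes_cascade_general n p q r hpq_le hpq_pos σ hsorted
end

section
/- Let n be a natural number, p, q, r : Fin n → ℝ, and σ a permutation of Fin n. Fix a position i with i + 1 < n, set a = σ(i), b = σ(i+1), and let P = ∏_{j<i} (1 − p(σ(j)) − q(σ(j))). Let σ' be the permutation obtained from σ by swapping the items at positions i and i+1 (i.e. σ' = σ composed with the transposition of i and i+1). Then F(σ) − F(σ') = P · ( p(a)·r(a)·(p(b)+q(b)) − p(b)·r(b)·(p(a)+q(a)) ). -/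
open Finset

lemma prod_comp_swap {M : Type*} [CommMonoid M] {α : Type*} [DecidableEq α]
    (f : α → M) (s : Finset α) (x y : α) (hx : x ∈ s) (hy : y ∈ s) :
    ∏ j ∈ s, f (Equiv.swap x y j) = ∏ j ∈ s, f j := by
  have hmem : ∀ a ∈ s, Equiv.swap x y a ∈ s := by
    intro a ha
    rcases eq_or_ne a x with rfl | hax
    · simpa using hy
    rcases eq_or_ne a y with rfl | hay
    · simpa using hx
    · rwa [Equiv.swap_apply_of_ne_of_ne hax hay]
  refine Finset.prod_nbij' (fun j => Equiv.swap x y j) (fun j => Equiv.swap x y j)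
    hmem hmem (by simp) (by simp) (by simp)

/-- Adjacent-exchange identity: swapping the items at positions `i` and `i+1`
changes the cascade objective by
`P · ( p(a)·r(a)·(p(b)+q(b)) − p(b)·r(b)·(p(a)+q(a)) )`,
where `a = σ(i)`, `b = σ(i+1)` and `P` is the prefix factor before position `i`. -/
theorem cascade_adjacent_exchange (n : ℕ) (p q r : Fin n → ℝ) (σ : Equiv.Perm (Fin n))
    (i : ℕ) (hi : i + 1 < n) :
    let ipos : Fin n := ⟨i, Nat.lt_of_succ_lt hi⟩
    let jpos : Fin n := ⟨i + 1, hi⟩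
    let a := σ ipos
    let b := σ jpos
    let P : ℝ := ∏ j ∈ Finset.Iio ipos, (1 - p (σ j) - q (σ j))
    let σ' : Equiv.Perm (Fin n) := σ * Equiv.swap ipos jpos
    cascadeF p q r σ - cascadeF p q r σ' =
      P * (p a * r a * (p b + q b) - p b * r b * (p a + q a)) := by
  intro ipos jpos a b P σ'
  have hij : ipos ≠ jpos := by simp [ipos, jpos, Fin.ext_iff]
  have hσ'i : σ' ipos = b := by simp [σ', b]
  have hσ'j : σ' jpos = a := by simp [σ', a]
  have hσ'other : ∀ k : Fin n, k ≠ ipos → k ≠ jpos → σ' k = σ k := by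
    intro k h1 h2
    simp [σ', Equiv.swap_apply_of_ne_of_ne h1 h2]
  have hpre_le : ∀ k : Fin n, (k : ℕ) ≤ i →
      ∏ j ∈ Finset.Iio k, (1 - p (σ' j) - q (σ' j))
        = ∏ j ∈ Finset.Iio k, (1 - p (σ j) - q (σ j)) := by
    intro k hk
    refine Finset.prod_congr rfl fun j hj => ?_
    simp only [Finset.mem_Iio, Fin.lt_def] at hj
    rw [hσ'other]
    · show j ≠ ipos
      rw [Ne, Fin.ext_iff]; simp only [ipos, Fin.val_mk]; omega
    · show j ≠ jpos
      rw [Ne, Fin.ext_iff]; simp only [jpos, Fin.val_mk]; omega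
  have hP' : ∏ j ∈ Finset.Iio ipos, (1 - p (σ' j) - q (σ' j)) = P := hpre_le ipos le_rfl
  have hpre_gt : ∀ k : Fin n, (jpos : ℕ) < (k : ℕ) →
      ∏ j ∈ Finset.Iio k, (1 - p (σ' j) - q (σ' j))
        = ∏ j ∈ Finset.Iio k, (1 - p (σ j) - q (σ j)) := by
    intro k hk
    have h1 : ipos ∈ Finset.Iio k := by
      simp only [Finset.mem_Iio, Fin.lt_def, ipos, Fin.val_mk]
      simp only [jpos, Fin.val_mk] at hk; omega
    have h2 : jpos ∈ Finset.Iio k := by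
      simp only [Finset.mem_Iio, Fin.lt_def]
      exact hk
    have : ∏ j ∈ Finset.Iio k, (1 - p (σ' j) - q (σ' j))
        = ∏ j ∈ Finset.Iio k, (fun x => 1 - p (σ x) - q (σ x)) (Equiv.swap ipos jpos j) := rfl
    rw [this]
    exact prod_comp_swap (fun x => 1 - p (σ x) - q (σ x)) (Finset.Iio k) ipos jpos h1 h2
  have key : ∀ k : Fin n, k ≠ ipos → k ≠ jpos →
      cascadeProb p q σ k * r (σ k) - cascadeProb p q σ' k * r (σ' k) = 0 := by
    intro k h1 h2
    have hcase : (k : ℕ) ≤ i ∨ (jpos : ℕ) < (k : ℕ) := by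
      rw [Ne, Fin.ext_iff] at h1 h2
      simp only [ipos, jpos, Fin.val_mk] at h1 h2 ⊢
      omega
    unfold cascadeProb
    rw [hσ'other k h1 h2]
    rcases hcase with h | h
    · rw [hpre_le k h]; ring
    · rw [hpre_gt k h]; ring
  have hsplit : cascadeF p q r σ - cascadeF p q r σ' =
      ∑ k ∈ ({ipos, jpos} : Finset (Fin n)),
        (cascadeProb p q σ k * r (σ k) - cascadeProb p q σ' k * r (σ' k)) := by
    unfold cascadeF
    rw [← Finset.sum_sub_distrib]
    refine (Finset.sum_subset (Finset.subset_univ _) ?_).symm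
    intro k _ hk
    simp only [Finset.mem_insert, Finset.mem_singleton, not_or] at hk
    exact key k hk.1 hk.2
  rw [hsplit, Finset.sum_pair hij]
  have hIio : Finset.Iio jpos = insert ipos (Finset.Iio ipos) := by
    ext k
    simp only [Finset.mem_Iio, Finset.mem_insert, Fin.lt_def, Fin.ext_iff, ipos, jpos,
      Fin.val_mk]
    omega
  have hnotmem : ipos ∉ Finset.Iio ipos := by simp
  have t1 : cascadeProb p q σ ipos = P * p a := rfl
  have t2 : cascadeProb p q σ jpos = (1 - p a - q a) * P * p b := by
    unfold cascadeProb
    rw [hIio, Finset.prod_insert hnotmem]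
  have t3 : cascadeProb p q σ' ipos = P * p b := by
    unfold cascadeProb
    rw [hP', hσ'i]
  have t4 : cascadeProb p q σ' jpos = (1 - p b - q b) * P * p a := by
    unfold cascadeProb
    rw [hIio, Finset.prod_insert hnotmem, hσ'i, hσ'j, hP']
  rw [t1, t2, t3, t4, hσ'i, hσ'j]
  ring
end

section
/- Let n be a natural number and p, q, r : Fin n → ℝ with 0 ≤ p(v), 0 ≤ q(v) and p(v)+q(v) > 0 for all v; define the score s(v) = p(v)·r(v)/(p(v)+q(v)). Let σ be a permutation of Fin n, fix a position i with i + 1 < n, set a = σ(i), b = σ(i+1), and suppose the prefix factor P = ∏_{j<i} (1 − p(σ(j)) − q(σ(j))) is strictly positive. Let σ' be σ with the items at positions i and i+1 swapped. Then F(σ) ≥ F(σ') if and only if s(a) ≥ s(b). -/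
open Finset

/-- Score of item `v`: `s(v) = p(v)·r(v)/(p(v)+q(v))`. -/
noncomputable def score {n : ℕ} (p q r : Fin n → ℝ) (v : Fin n) : ℝ :=
  p v * r v / (p v + q v)

/-- Sign lemma for adjacent exchanges: if the prefix factor before position `i`
is strictly positive, then swapping positions `i` and `i+1` does not increase the
cascade objective iff the score of `σ(i)` is at least the score of `σ(i+1)`. -/
theorem cascade_adjacent_exchange_iff_score (n : ℕ) (p q r : Fin n → ℝ)
    (hp : ∀ v, 0 ≤ p v) (hq : ∀ v, 0 ≤ q v) (hpq_pos : ∀ v, 0 < p v + q v)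
    (σ : Equiv.Perm (Fin n)) (i : ℕ) (hi : i + 1 < n)
    (hP : 0 < ∏ j ∈ Finset.Iio (⟨i, Nat.lt_of_succ_lt hi⟩ : Fin n),
      (1 - p (σ j) - q (σ j))) :
    let ipos : Fin n := ⟨i, Nat.lt_of_succ_lt hi⟩
    let jpos : Fin n := ⟨i + 1, hi⟩
    let a := σ ipos
    let b := σ jpos
    let σ' : Equiv.Perm (Fin n) := σ * Equiv.swap ipos jpos
    cascadeF p q r σ ≥ cascadeF p q r σ' ↔ score p q r a ≥ score p q r b := by
  intro ipos jpos a b σ'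
  have hij_lt : ipos < jpos := by simp [ipos, jpos, Fin.mk_lt_mk]
  have hij : ipos ≠ jpos := ne_of_lt hij_lt
  have hσ'i : σ' ipos = b := by simp [σ', b, Equiv.swap_apply_left]
  have hσ'j : σ' jpos = a := by simp [σ', a, Equiv.swap_apply_right]
  have hσ'k : ∀ k, k ≠ ipos → k ≠ jpos → σ' k = σ k := fun k h1 h2 => by
    simp [σ', Equiv.swap_apply_of_ne_of_ne h1 h2]
  set f : Fin n → ℝ := fun v => 1 - p v - q v with hf
  set P : ℝ := ∏ j ∈ Finset.Iio ipos, f (σ j) with hPdef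
  -- prefix products agree at every position except jpos
  have hpre : ∀ k : Fin n, k ≠ jpos →
      (∏ j ∈ Finset.Iio k, f (σ' j)) = ∏ j ∈ Finset.Iio k, f (σ j) := by
    intro k hk
    rcases le_or_gt k ipos with hki | hki
    · refine Finset.prod_congr rfl fun j hj => ?_
      rw [Finset.mem_Iio] at hj
      have h1 : j ≠ ipos := ne_of_lt (lt_of_lt_of_le hj hki)
      have h2 : j ≠ jpos := ne_of_lt ((lt_of_lt_of_le hj hki).trans hij_lt)
      rw [hσ'k j h1 h2]
    · -- here jpos < k, so swap maps Iio k to itself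
      have hjk : jpos < k := by
        simp only [Fin.lt_def, Fin.ne_iff_vne, ipos, jpos] at hki hk ⊢; omega
      have hik : ipos < k := by
        simp only [Fin.lt_def, ipos, jpos] at hjk ⊢; omega
      have hmem : ∀ j ∈ Finset.Iio k, Equiv.swap ipos jpos j ∈ Finset.Iio k := by
        intro j hj
        rcases eq_or_ne j ipos with rfl | h1
        · simpa [Equiv.swap_apply_left] using hjk
        rcases eq_or_ne j jpos with rfl | h2
        · simpa [Equiv.swap_apply_right] using hik
        · rwa [Equiv.swap_apply_of_ne_of_ne h1 h2]
      refine Finset.prod_bij' (fun j _ => Equiv.swap ipos jpos j)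
        (fun j _ => Equiv.swap ipos jpos j) hmem hmem
        (fun j _ => Equiv.swap_apply_self _ _ _)
        (fun j _ => Equiv.swap_apply_self _ _ _) ?_
      intro j hj
      simp [σ']
  have hIio : Finset.Iio jpos = insert ipos (Finset.Iio ipos) := by
    ext x
    simp only [Finset.mem_Iio, Finset.mem_insert, Fin.lt_def, Fin.ext_iff, ipos, jpos]
    omega
  have hnm : ipos ∉ Finset.Iio ipos := by simp
  have hPj : (∏ j ∈ Finset.Iio jpos, f (σ j)) = f a * P := by
    rw [hIio, Finset.prod_insert hnm]
  have hPj' : (∏ j ∈ Finset.Iio jpos, f (σ' j)) = f b * P := by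
    rw [hIio, Finset.prod_insert hnm, hσ'i]
    congr 1
    refine Finset.prod_congr rfl fun j hj => ?_
    rw [Finset.mem_Iio] at hj
    have h1 : j ≠ ipos := ne_of_lt hj
    have h2 : j ≠ jpos := ne_of_lt (hj.trans hij_lt)
    rw [hσ'k j h1 h2]
  have hPi' : (∏ j ∈ Finset.Iio ipos, f (σ' j)) = P := hpre ipos hij
  -- the key difference formula
  have key : cascadeF p q r σ - cascadeF p q r σ' =
      P * (p a * r a * (p b + q b) - p b * r b * (p a + q a)) := by
    unfold cascadeF cascadeProb
    rw [← Finset.sum_sub_distrib]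
    have hzero : ∀ k ∈ Finset.univ \ ({ipos, jpos} : Finset (Fin n)),
        ((∏ j ∈ Finset.Iio k, (1 - p (σ j) - q (σ j))) * p (σ k) * r (σ k) -
          (∏ j ∈ Finset.Iio k, (1 - p (σ' j) - q (σ' j))) * p (σ' k) * r (σ' k)) = 0 := by
      intro k hk
      simp only [Finset.mem_sdiff, Finset.mem_insert, Finset.mem_singleton, not_or] at hk
      obtain ⟨-, h1, h2⟩ := hk
      rw [hσ'k k h1 h2, hpre k h2]
      ring
    rw [← Finset.sum_subset (Finset.subset_univ ({ipos, jpos} : Finset (Fin n)))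
      (by intro x hx hx'; exact hzero x (Finset.mem_sdiff.mpr ⟨hx, hx'⟩))]
    rw [Finset.sum_pair hij]
    have e1 : (∏ j ∈ Finset.Iio ipos, (1 - p (σ j) - q (σ j))) = P := rfl
    have e2 : (∏ j ∈ Finset.Iio ipos, (1 - p (σ' j) - q (σ' j))) = P := hPi'
    have e3 : (∏ j ∈ Finset.Iio jpos, (1 - p (σ j) - q (σ j))) = f a * P := hPj
    have e4 : (∏ j ∈ Finset.Iio jpos, (1 - p (σ' j) - q (σ' j))) = f b * P := hPj'
    rw [e1, e2, e3, e4, hσ'i, hσ'j]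
    show P * p a * r a - P * p b * r b + ((f a * P) * p b * r b - (f b * P) * p a * r a) = _
    simp only [hf]
    ring
  have hPpos : 0 < P := hP
  constructor
  · intro h
    have h0 : 0 ≤ P * (p a * r a * (p b + q b) - p b * r b * (p a + q a)) := by
      rw [← key]; linarith
    have h1 : 0 ≤ p a * r a * (p b + q b) - p b * r b * (p a + q a) :=
      (mul_nonneg_iff_of_pos_left hPpos).mp h0
    have := (div_le_div_iff₀ (hpq_pos b) (hpq_pos a)).mpr
      (show p b * r b * (p a + q a) ≤ p a * r a * (p b + q b) by linarith)
    simpa [score, ge_iff_le] using this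
  · intro h
    have h2 : p b * r b * (p a + q a) ≤ p a * r a * (p b + q b) :=
      (div_le_div_iff₀ (hpq_pos b) (hpq_pos a)).mp (by simpa [score, ge_iff_le] using h)
    have : 0 ≤ cascadeF p q r σ - cascadeF p q r σ' := by
      rw [key]; exact mul_nonneg hPpos.le (by linarith)
    linarith
end
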